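/- Asymptotic approach to the inner equator: let a > b > 0 and let r, θ : ℝ → ℝ be twice continuously differentiable functions satisfying the torus geodesic equations with r(0) = 0, r'(0) > 0, speed v > 0, and angular momentum ℓ satisfying ℓ² = (a − b)²·v² (the critical energy level E = v²/2 = ℓ²/(2(a−b)²)). Then r is strictly increasing on [0, ∞), 0 < r(λ) < π·b for all λ > 0, and r(λ) → π·b as λ → +∞: the geodesic asymptotically approaches the inner equator without ever reaching it. -/

import Mathlib

/-!
Along a geodesic of a surface of revolution `dρ² + R(ρ)² dθ²` the angular momentum `ℓ = R² θ'`
and the energy are conserved, so `r'² + ℓ² / R(r)² = v²`. At the critical level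
`ℓ² = (a - b)² v²` this reads `r'² = v² (1 - (a - b)² / R(r)²)`. Since `R(ρ) - (a - b)` vanishes
quadratically at the inner equator `ρ = ±π b`, it gives `|r'| ≤ C |r ∓ π b|`, and Grönwall's
inequality shows that `r` cannot reach `±π b`: it would then be constant. Inside `(-π b, π b)` the
right-hand side is positive, so `r' > 0` throughout; hence `r` increases to a limit `L ≤ π b`, and
`L < π b` is impossible because `r'` would stay bounded away from zero.
-/

open Real Filter Set Topology

theorem Continuous.lt_of_forall_ne {X α : Type*} [TopologicalSpace X] [PreconnectedSpace X]
    [LinearOrder α] [TopologicalSpace α] [OrderClosedTopology α] {f : X → α}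
    (hf : Continuous f) {c : α} {x₀ : X} (h₀ : f x₀ < c) (hne : ∀ x, f x ≠ c) (x : X) :
    f x < c :=
  not_le.1 fun h ↦ let ⟨y, hy⟩ := intermediate_value_univ x₀ x hf ⟨h₀.le, h⟩; hne y hy

theorem eq_zero_of_abs_deriv_le_mul_abs_of_eq_zero {f : ℝ → ℝ} {K T : ℝ}
    (hf : Differentiable ℝ f) (bound : ∀ t, |deriv f t| ≤ K * |f t|) (hT : f T = 0) (t : ℝ) :
    f t = 0 := by
  rcases le_total T t with hTt | htT
  · exact eq_zero_of_abs_deriv_le_mul_abs_self_of_eq_zero_right hf.continuous.continuousOn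
      (fun s _ ↦ (hf s).hasDerivAt.hasDerivWithinAt) hT (fun s _ ↦ bound s) t ⟨hTt, le_rfl⟩
  · have hg : Differentiable ℝ (fun s ↦ f (-s)) := fun s ↦ differentiableAt_comp_neg.2 (hf _)
    simpa using eq_zero_of_abs_deriv_le_mul_abs_self_of_eq_zero_right hg.continuous.continuousOn
      (fun s _ ↦ (hg s).hasDerivAt.hasDerivWithinAt) (by simpa using hT)
      (fun s _ ↦ by simpa [deriv_comp_neg] using bound (-s)) (-t) ⟨neg_le_neg htT, le_rfl⟩

/-- The geodesic equations of the metric `dρ² + R(ρ)² dθ²`, with `R'` the derivative of `R`. -/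
def IsRevolutionGeodesic (R R' r θ : ℝ → ℝ) : Prop :=
  ∀ t, deriv (deriv r) t = R (r t) * R' (r t) * deriv θ t ^ 2 ∧
    deriv (deriv θ) t = -(2 * R' (r t) / R (r t)) * deriv r t * deriv θ t

namespace IsRevolutionGeodesic

variable {R R' r θ : ℝ → ℝ}

theorem angularMomentum_eq (hg : IsRevolutionGeodesic R R' r θ)
    (hR : ∀ ρ, HasDerivAt R (R' ρ) ρ)
    (hr : Differentiable ℝ r) (hθ' : Differentiable ℝ (deriv θ)) (t : ℝ) :
    R (r t) ^ 2 * deriv θ t = R (r 0) ^ 2 * deriv θ 0 := by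
  have hd (s : ℝ) : HasDerivAt (fun s ↦ R (r s) ^ 2 * deriv θ s) 0 s := by
    refine ((((hR (r s)).comp s (hr s).hasDerivAt).fun_pow 2).fun_mul
      (hθ' s).hasDerivAt).congr_deriv ?_
    rw [Function.comp_apply, (hg s).2]
    field_simp
    ring
  exact is_const_of_deriv_eq_zero (fun s ↦ (hd s).differentiableAt) (fun s ↦ (hd s).deriv) t 0

theorem energy_eq (hg : IsRevolutionGeodesic R R' r θ)
    (hR : ∀ ρ, HasDerivAt R (R' ρ) ρ)
    (hr : Differentiable ℝ r) (hr' : Differentiable ℝ (deriv r))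
    (hθ' : Differentiable ℝ (deriv θ)) (t : ℝ) :
    deriv r t ^ 2 + R (r t) ^ 2 * deriv θ t ^ 2
      = deriv r 0 ^ 2 + R (r 0) ^ 2 * deriv θ 0 ^ 2 := by
  have hd (s : ℝ) :
      HasDerivAt (fun s ↦ deriv r s ^ 2 + R (r s) ^ 2 * deriv θ s ^ 2) 0 s := by
    refine (((hr' s).hasDerivAt.fun_pow 2).fun_add
      ((((hR (r s)).comp s (hr s).hasDerivAt).fun_pow 2).fun_mul
        ((hθ' s).hasDerivAt.fun_pow 2))).congr_deriv ?_
    rw [Function.comp_apply, (hg s).1, (hg s).2]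
    field_simp
    ring
  exact is_const_of_deriv_eq_zero (fun s ↦ (hd s).differentiableAt) (fun s ↦ (hd s).deriv) t 0

theorem radial_energy_eq (hg : IsRevolutionGeodesic R R' r θ)
    (hR : ∀ ρ, HasDerivAt R (R' ρ) ρ)
    (hr : Differentiable ℝ r) (hr' : Differentiable ℝ (deriv r))
    (hθ' : Differentiable ℝ (deriv θ)) (t : ℝ) :
    deriv r t ^ 2 + (R (r 0) ^ 2 * deriv θ 0) ^ 2 / R (r t) ^ 2
      = deriv r 0 ^ 2 + R (r 0) ^ 2 * deriv θ 0 ^ 2 := by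
  rw [← hg.energy_eq hR hr hr' hθ' t, ← hg.angularMomentum_eq hR hr hθ' t]
  field_simp

end IsRevolutionGeodesic

noncomputable def torusRadius (a b ρ : ℝ) : ℝ := a + b * cos (ρ / b)

section Torus

variable {a b : ℝ}

theorem hasDerivAt_torusRadius (hb : b ≠ 0) (ρ : ℝ) :
    HasDerivAt (torusRadius a b) (-sin (ρ / b)) ρ := by
  refine (((hasDerivAt_cos _).comp ρ ((hasDerivAt_id' ρ).div_const b)).const_mul b).const_add a
    |>.congr_deriv ?_
  field_simp

theorem sub_le_torusRadius (hb : 0 ≤ b) (ρ : ℝ) : a - b ≤ torusRadius a b ρ := by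
  unfold torusRadius
  nlinarith [neg_one_le_cos (ρ / b)]

theorem sub_lt_torusRadius (hb : 0 < b) {ρ : ℝ} (hρ : |ρ| < π * b) :
    a - b < torusRadius a b ρ := by
  have hcos : -1 < cos (ρ / b) := by
    rw [← cos_abs, abs_div, abs_of_pos hb, ← cos_pi]
    exact cos_lt_cos_of_nonneg_of_le_pi (by positivity) le_rfl ((div_lt_iff₀ hb).2 hρ)
  unfold torusRadius
  nlinarith

theorem div_torusRadius_sq_lt_one (hb : 0 < b) (hab : b < a) {ρ : ℝ} (hρ : |ρ| < π * b) :
    (a - b) ^ 2 / torusRadius a b ρ ^ 2 < 1 := by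
  have hR := sub_lt_torusRadius (a := a) hb hρ
  exact (div_lt_one (by nlinarith)).2 (pow_lt_pow_left₀ hR (by linarith) two_ne_zero)

theorem torusRadius_le_torusRadius (hb : 0 < b) {ρ σ : ℝ} (hρ : 0 ≤ ρ) (hρσ : ρ ≤ σ)
    (hσ : σ ≤ π * b) : torusRadius a b σ ≤ torusRadius a b ρ := by
  unfold torusRadius
  gcongr
  exact cos_le_cos_of_nonneg_of_le_pi (by positivity) ((div_le_iff₀ hb).2 hσ) (by gcongr)

theorem torusRadius_sub_le (hb : 0 < b) {c : ℝ} (hc : cos (c / b) = -1) (ρ : ℝ) :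
    torusRadius a b ρ - (a - b) ≤ (ρ - c) ^ 2 / (2 * b) := by
  have hsin : sin (c / b) = 0 := by nlinarith [sin_sq_add_cos_sq (c / b)]
  have hcos : cos (ρ / b) = -cos ((ρ - c) / b) := by
    rw [show ρ / b = (ρ - c) / b + c / b by ring, cos_add, hc, hsin]
    ring
  have := one_sub_sq_div_two_le_cos (x := (ρ - c) / b)
  calc torusRadius a b ρ - (a - b) = b * (1 - cos ((ρ - c) / b)) := by
        rw [torusRadius, hcos]; ring
    _ ≤ b * (((ρ - c) / b) ^ 2 / 2) := by gcongr; linarith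
    _ = (ρ - c) ^ 2 / (2 * b) := by field_simp

end Torus

/-- The radial energy equation `r'² / 2 + ℓ² / (2 R(r)²) = v² / 2` at the critical level
`ℓ² = (a - b)² v²`. -/
def IsCriticalRadialMotion (a b v : ℝ) (r : ℝ → ℝ) : Prop :=
  ∀ t, deriv r t ^ 2 = v ^ 2 * (1 - (a - b) ^ 2 / torusRadius a b (r t) ^ 2)

namespace IsCriticalRadialMotion

variable {a b v : ℝ} {r : ℝ → ℝ}

theorem abs_deriv_le_mul_abs_sub (hrad : IsCriticalRadialMotion a b v r) (hb : 0 < b)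
    (hab : b < a) {c : ℝ} (hc : cos (c / b) = -1) (t : ℝ) :
    |deriv r t| ≤ √(v ^ 2 / (b * (a - b))) * |r t - c| := by
  have hrt := hrad t
  set R := torusRadius a b (r t)
  have hR : a - b ≤ R := sub_le_torusRadius hb.le _
  have hab' : 0 < a - b := sub_pos.2 hab
  have hR₀ : R ≠ 0 := by linarith
  have hsum : (R + (a - b)) / R ^ 2 ≤ 2 / (a - b) := by
    rw [div_le_div_iff₀ (by nlinarith) hab']
    nlinarith
  have hsq : deriv r t ^ 2 ≤ v ^ 2 / (b * (a - b)) * (r t - c) ^ 2 :=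
    calc deriv r t ^ 2 = v ^ 2 * (R - (a - b)) * ((R + (a - b)) / R ^ 2) := by
          rw [hrt]; field_simp; ring
      _ ≤ v ^ 2 * ((r t - c) ^ 2 / (2 * b)) * (2 / (a - b)) := by
          gcongr ?_ * ?_
          · exact div_nonneg (by linarith) (sq_nonneg R)
          · exact mul_le_mul_of_nonneg_left (torusRadius_sub_le hb hc _) (sq_nonneg v)
      _ = v ^ 2 / (b * (a - b)) * (r t - c) ^ 2 := by field_simp
  rw [← sqrt_sq_eq_abs (r t - c), ← sqrt_mul (by positivity)]
  exact abs_le_sqrt hsq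

theorem ne_of_cos_eq_neg_one (hrad : IsCriticalRadialMotion a b v r) (hb : 0 < b) (hab : b < a)
    (hr : Differentiable ℝ r) {c : ℝ} (hc : cos (c / b) = -1) {t₀ : ℝ} (h₀ : r t₀ ≠ c)
    (t : ℝ) : r t ≠ c := fun ht ↦
  h₀ <| sub_eq_zero.1 <| eq_zero_of_abs_deriv_le_mul_abs_of_eq_zero (hr.sub_const c)
    (fun s ↦ by simpa using hrad.abs_deriv_le_mul_abs_sub hb hab hc s) (sub_eq_zero.2 ht) t₀

theorem abs_lt_pi_mul (hrad : IsCriticalRadialMotion a b v r) (hb : 0 < b) (hab : b < a)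
    (hr : Differentiable ℝ r) (h₀ : |r 0| < π * b) (t : ℝ) : |r t| < π * b := by
  have hπ : cos (π * b / b) = -1 := by rw [mul_div_cancel_right₀ _ hb.ne', cos_pi]
  have hπ' : cos (-(π * b) / b) = -1 := by rw [neg_div, cos_neg, hπ]
  obtain ⟨hlo, hhi⟩ := abs_lt.1 h₀
  refine abs_lt.2 ⟨neg_lt.1 ?_, ?_⟩
  · refine hr.continuous.neg.lt_of_forall_ne (neg_lt.1 hlo) (fun s hs ↦ ?_) t
    exact hrad.ne_of_cos_eq_neg_one hb hab hr hπ' hlo.ne' s (neg_eq_iff_eq_neg.1 hs)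
  · exact hr.continuous.lt_of_forall_ne hhi (hrad.ne_of_cos_eq_neg_one hb hab hr hπ hhi.ne) t

theorem ne_zero_of_deriv_ne_zero (hrad : IsCriticalRadialMotion a b v r) {t₀ : ℝ}
    (h₀ : deriv r t₀ ≠ 0) : v ≠ 0 := by
  rintro rfl
  simpa using h₀ (by simpa using hrad t₀)

theorem deriv_pos (hrad : IsCriticalRadialMotion a b v r) (hb : 0 < b) (hab : b < a)
    (hr' : Continuous (deriv r)) (hbound : ∀ t, |r t| < π * b) (h₀ : 0 < deriv r 0)
    (t : ℝ) : 0 < deriv r t := by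
  have hv := hrad.ne_zero_of_deriv_ne_zero h₀.ne'
  refine neg_neg_iff_pos.1 (hr'.neg.lt_of_forall_ne (neg_neg_iff_pos.2 h₀) (fun s hs ↦ ?_) t)
  have hsq : 0 < deriv r s ^ 2 := by
    have := sub_pos.2 (div_torusRadius_sq_lt_one hb hab (hbound s))
    rw [hrad s]
    positivity
  simp [neg_eq_zero.1 hs] at hsq

theorem le_deriv_sq (hrad : IsCriticalRadialMotion a b v r) (hb : 0 < b) (hab : b < a)
    {L t : ℝ} (ht : 0 ≤ r t) (htL : r t ≤ L) (hL : L ≤ π * b) :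
    v ^ 2 * (1 - (a - b) ^ 2 / torusRadius a b L ^ 2) ≤ deriv r t ^ 2 := by
  rw [hrad]
  have hRL : 0 < torusRadius a b L := (sub_pos.2 hab).trans_le (sub_le_torusRadius hb.le L)
  have := torusRadius_le_torusRadius (a := a) hb ht htL hL
  gcongr

theorem tendsto_pi_mul (hrad : IsCriticalRadialMotion a b v r) (hb : 0 < b) (hab : b < a)
    (hr : Differentiable ℝ r) (hpos : ∀ t, 0 < deriv r t) (h₀ : r 0 = 0)
    (hbound : ∀ t, r t < π * b) : Tendsto r atTop (𝓝 (π * b)) := by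
  have hmono := strictMono_of_deriv_pos hpos
  have hbdd : BddAbove (range r) := ⟨π * b, forall_mem_range.2 fun t ↦ (hbound t).le⟩
  suffices hsup : ⨆ t, r t = π * b from hsup ▸ tendsto_atTop_ciSup hmono.monotone hbdd
  refine le_antisymm (ciSup_le fun t ↦ (hbound t).le) (not_lt.1 fun hL ↦ ?_)
  set L := ⨆ t, r t
  have hL₀ : 0 ≤ L := h₀ ▸ le_ciSup hbdd 0
  have hv := hrad.ne_zero_of_deriv_ne_zero (hpos 0).ne'
  set m := v ^ 2 * (1 - (a - b) ^ 2 / torusRadius a b L ^ 2)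
  have hm : 0 < m := by
    have := sub_pos.2 (div_torusRadius_sq_lt_one hb hab (abs_lt.2 ⟨by linarith [pi_pos], hL⟩))
    positivity
  have hderiv : ∀ s ∈ interior (Ici 0), √m ≤ deriv r s := fun s hs ↦ by
    rw [interior_Ici] at hs
    have hrs : 0 ≤ r s := h₀ ▸ hmono.monotone (le_of_lt hs)
    exact (sqrt_le_sqrt (hrad.le_deriv_sq hb hab hrs (le_ciSup hbdd s) hL.le)).trans_eq
      (sqrt_sq (hpos s).le)
  set t := L / √m + 1
  have ht : 0 ≤ t := by positivity
  have hgrowth : √m * t ≤ r t := by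
    simpa [h₀] using (convex_Ici 0).mul_sub_le_image_sub_of_le_deriv hr.continuous.continuousOn
      hr.differentiableOn hderiv 0 self_mem_Ici t ht ht
  have : √m * t = L + √m := by rw [mul_add, mul_div_cancel₀ _ (sqrt_pos.2 hm).ne', mul_one]
  linarith [le_ciSup hbdd t, sqrt_pos.2 hm]

end IsCriticalRadialMotion

theorem torus_geodesic_asymptotic_to_inner_equator_general
    (a b : ℝ) (hb : 0 < b) (hab : b < a)
    (r θ : ℝ → ℝ) (hr : ContDiff ℝ 2 r) (hθ : ContDiff ℝ 2 θ)
    (hgeo : ∀ t : ℝ,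
      deriv (deriv r) t =
        -Real.sin (r t / b) * (a + b * Real.cos (r t / b)) * (deriv θ t) ^ 2 ∧
      deriv (deriv θ) t =
        (2 * Real.sin (r t / b) / (a + b * Real.cos (r t / b))) * deriv r t * deriv θ t)
    (hr0 : r 0 = 0) (hr0' : 0 < deriv r 0)
    (ℓ v : ℝ)
    (hℓ : ℓ = (a + b * Real.cos (r 0 / b)) ^ 2 * deriv θ 0)
    (hv : v = Real.sqrt ((deriv r 0) ^ 2 +
      (a + b * Real.cos (r 0 / b)) ^ 2 * (deriv θ 0) ^ 2))
    (hcrit : ℓ ^ 2 = (a - b) ^ 2 * v ^ 2) :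
    StrictMonoOn r (Set.Ici (0 : ℝ)) ∧
    (∀ t : ℝ, 0 < t → 0 < r t ∧ r t < Real.pi * b) ∧
    Filter.Tendsto r Filter.atTop (nhds (Real.pi * b)) := by
  have hr₁ : Differentiable ℝ r := hr.differentiable two_ne_zero
  have hr₂ : Differentiable ℝ (deriv r) := (hr.iterate_deriv' 1 1).differentiable one_ne_zero
  have hθ₂ : Differentiable ℝ (deriv θ) := (hθ.iterate_deriv' 1 1).differentiable one_ne_zero
  have hrev : IsRevolutionGeodesic (torusRadius a b) (fun ρ ↦ -sin (ρ / b)) r θ := fun t ↦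
    ⟨(hgeo t).1.trans (by rw [torusRadius]; ring), (hgeo t).2.trans (by rw [torusRadius]; ring)⟩
  have hv' : v ^ 2 = deriv r 0 ^ 2 + torusRadius a b (r 0) ^ 2 * deriv θ 0 ^ 2 := by
    rw [hv, sq_sqrt (by positivity), torusRadius]
  have hrad : IsCriticalRadialMotion a b v r := fun t ↦ by
    have hE := hrev.radial_energy_eq (hasDerivAt_torusRadius hb.ne') hr₁ hr₂ hθ₂ t
    rw [← hv', torusRadius, ← hℓ, hcrit] at hE
    linear_combination hE
  have hbound := hrad.abs_lt_pi_mul hb hab hr₁ (by rw [hr0, abs_zero]; positivity)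
  have hpos := hrad.deriv_pos hb hab hr₂.continuous hbound hr0'
  have hmono := strictMono_of_deriv_pos hpos
  have hbelow (t : ℝ) : r t < π * b := (abs_lt.1 (hbound t)).2
  exact ⟨hmono.strictMonoOn _, fun t ht ↦ ⟨hr0 ▸ hmono ht, hbelow t⟩,
    hrad.tendsto_pi_mul hb hab hr₁ hpos hr0 hbelow⟩

/-- Asymptotic approach to the inner equator: at the critical energy level
ℓ² = (a-b)²v² with r(0) = 0, r'(0) > 0, the radial coordinate increases strictly
on [0,∞), stays in (0, πb), and tends to πb as t → ∞. -/
theorem torus_geodesic_asymptotic_to_inner_equator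
    (a b : ℝ) (hb : 0 < b) (hab : b < a)
    (r θ : ℝ → ℝ) (hr : ContDiff ℝ 2 r) (hθ : ContDiff ℝ 2 θ)
    (hgeo : ∀ t : ℝ,
      deriv (deriv r) t =
        -Real.sin (r t / b) * (a + b * Real.cos (r t / b)) * (deriv θ t) ^ 2 ∧
      deriv (deriv θ) t =
        (2 * Real.sin (r t / b) / (a + b * Real.cos (r t / b))) * deriv r t * deriv θ t)
    (hr0 : r 0 = 0) (hr0' : 0 < deriv r 0)
    (ℓ v : ℝ)
    (hℓ : ℓ = (a + b * Real.cos (r 0 / b)) ^ 2 * deriv θ 0)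
    (hv : v = Real.sqrt ((deriv r 0) ^ 2 +
      (a + b * Real.cos (r 0 / b)) ^ 2 * (deriv θ 0) ^ 2))
    (hvpos : 0 < v)
    (hcrit : ℓ ^ 2 = (a - b) ^ 2 * v ^ 2) :
    StrictMonoOn r (Set.Ici (0 : ℝ)) ∧
    (∀ t : ℝ, 0 < t → 0 < r t ∧ r t < Real.pi * b) ∧
    Filter.Tendsto r Filter.atTop (nhds (Real.pi * b)) :=
  torus_geodesic_asymptotic_to_inner_equator_general a b hb hab r θ hr hθ hgeo hr0 hr0' ℓ v hℓ hv
    hcrit
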